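/- Let X ⊆ R^n_{≥0} be a nonempty finite feasible set, c_1,...,c_K ∈ R^n_{≥0} with K even, and S_1,...,S_{K/2} a pairwise partition of [K] with midpoints c̄_j = (c_{j_1}+c_{j_2})/2. If x̄ ∈ X is an α-approximation for the aggregated min-max problem, i.e., max_{j∈[K/2]} c̄_jᵗ x̄ ≤ α · min_{x∈X} max_{j∈[K/2]} c̄_jᵗ x, then x̄ is a 2α-approximation for the original problem: max_{i∈[K]} c_iᵗ x̄ ≤ 2α · min_{x∈X} max_{i∈[K]} c_iᵗ x. -/
import Mathlib


/-- Worst-case cost of solution `x` over `K` scenarios `c`. -/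
noncomputable def maxCost {n K : ℕ} (c : Fin K → Fin n → ℝ) (hK : 0 < K)
    (x : Fin n → ℝ) : ℝ :=
  Finset.univ.sup' ⟨⟨0, hK⟩, Finset.mem_univ _⟩ fun i => ∑ j, c i j * x j

lemma le_maxCost {n K : ℕ} (c : Fin K → Fin n → ℝ) (hK : 0 < K) (x : Fin n → ℝ)
    (i : Fin K) : ∑ j, c i j * x j ≤ maxCost c hK x := by
  unfold maxCost; exact Finset.le_sup' (fun i => ∑ j, c i j * x j) (Finset.mem_univ i)

lemma maxCost_le {n K : ℕ} (c : Fin K → Fin n → ℝ) (hK : 0 < K) (x : Fin n → ℝ)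
    (y : ℝ) (h : ∀ i, ∑ j, c i j * x j ≤ y) : maxCost c hK x ≤ y := by
  unfold maxCost; exact Finset.sup'_le _ _ fun i _ => h i

/-- An `α`-approximation for the pairwise-aggregated min-max problem is a
`2α`-approximation for the original min-max problem. -/
theorem stmt2 {n m : ℕ} (hm : 0 < m)
    (X : Finset (Fin n → ℝ)) (hX : X.Nonempty)
    (hXnn : ∀ x ∈ X, ∀ j, 0 ≤ x j)
    (c : Fin (2 * m) → Fin n → ℝ) (hc : ∀ i j, 0 ≤ c i j)
    (π : Fin m × Fin 2 ≃ Fin (2 * m))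
    (cbar : Fin m → Fin n → ℝ)
    (hcbar : ∀ j, cbar j = fun t => (c (π (j, 0)) t + c (π (j, 1)) t) / 2)
    (α : ℝ) (hα : 1 ≤ α)
    (xbar : Fin n → ℝ) (hxbar : xbar ∈ X)
    (happrox : maxCost cbar hm xbar ≤ α * X.inf' hX (maxCost cbar hm)) :
    maxCost c (by omega) xbar ≤ 2 * α * X.inf' hX (maxCost c (by omega)) := by
  have hK : 0 < 2 * m := by omega
  -- sum of cbar in terms of sums of c
  have hsum : ∀ (x : Fin n → ℝ) (j : Fin m),
      ∑ t, cbar j t * x t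
        = ((∑ t, c (π (j, 0)) t * x t) + ∑ t, c (π (j, 1)) t * x t) / 2 := by
    intro x j
    have h : ∀ t, cbar j t * x t = (c (π (j, 0)) t * x t + c (π (j, 1)) t * x t) / 2 := by
      intro t; rw [hcbar]; ring
    simp only [h]
    rw [← Finset.sum_div, Finset.sum_add_distrib]
  -- B: maxCost cbar x ≤ maxCost c x for all x
  have hB : ∀ x : Fin n → ℝ, maxCost cbar hm x ≤ maxCost c hK x := by
    intro x
    apply maxCost_le
    intro j
    rw [hsum]
    have h0 : (∑ t, c (π (j, 0)) t * x t) ≤ maxCost c hK x :=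
      le_maxCost c hK x (π (j, 0))
    have h1 : (∑ t, c (π (j, 1)) t * x t) ≤ maxCost c hK x :=
      le_maxCost c hK x (π (j, 1))
    linarith
  -- A: maxCost c xbar ≤ 2 * maxCost cbar xbar
  have hA : maxCost c hK xbar ≤ 2 * maxCost cbar hm xbar := by
    apply maxCost_le
    intro i
    obtain ⟨⟨j, k⟩, hjk⟩ := π.surjective i
    have hle : (∑ t, c i t * xbar t)
        ≤ (∑ t, c (π (j, 0)) t * xbar t) + ∑ t, c (π (j, 1)) t * xbar t := by
      have hnn : ∀ (i' : Fin (2 * m)), 0 ≤ ∑ t, c i' t * xbar t := fun i' =>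
        Finset.sum_nonneg fun t _ => mul_nonneg (hc i' t) (hXnn xbar hxbar t)
      have hk : k = 0 ∨ k = 1 := by omega
      rcases hk with hk | hk <;> subst hk <;> subst hjk
      · linarith [hnn (π (j, 1))]
      · linarith [hnn (π (j, 0))]
    have h2 : (2 : ℝ) * (∑ t, cbar j t * xbar t)
        = (∑ t, c (π (j, 0)) t * xbar t) + ∑ t, c (π (j, 1)) t * xbar t := by
      rw [hsum]; ring
    have hjle : (∑ t, cbar j t * xbar t) ≤ maxCost cbar hm xbar :=
      le_maxCost cbar hm xbar j
    linarith
  -- inf comparison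
  have hinf : X.inf' hX (maxCost cbar hm) ≤ X.inf' hX (maxCost c hK) := by
    apply Finset.le_inf'
    intro x hx
    exact le_trans (Finset.inf'_le _ hx) (hB x)
  have hα0 : (0 : ℝ) < α := lt_of_lt_of_le one_pos hα
  calc maxCost c hK xbar ≤ 2 * maxCost cbar hm xbar := hA
    _ ≤ 2 * (α * X.inf' hX (maxCost cbar hm)) := by linarith
    _ ≤ 2 * α * X.inf' hX (maxCost c hK) := by nlinarith
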